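/- arXiv:1901.05241 — 12 statements merged into one kernel-verified Lean document; each statement's English description precedes it below -/
import Mathlib

section
/- An integral domain R is a PRINC domain (every ideal generated by an idempotent pair is principal) if and only if every two-generated invertible ideal of R is principal. -/
/-- `a, b` form an idempotent pair in `R`. -/
def IsIdemPair {R : Type*} [CommRing R] (a b : R) : Prop :=
  a * (1 - a) ∈ Ideal.span {b} ∨ b * (1 - b) ∈ Ideal.span {a}

/-- A PRINC domain: every ideal generated by an idempotent pair is principal. -/
def IsPRINC (R : Type*) [CommRing R] : Prop :=
  ∀ a b : R, IsIdemPair a b → (Ideal.span {a, b}).IsPrincipal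

/-!
If `a(1 - a) = rb`, then `(a, b)(b, 1 - a) = (b)`, so for `b ≠ 0` the ideal `(a, b)` is invertible.
Conversely, if `(a, b)` is invertible, write `1 = ax + by` with `x, y ∈ (a, b)⁻¹`. The elements
`s = ax`, `t = ay`, `u = bx`, `v = by` lie in `R` and satisfy `s + v = 1` and `s(1 - s) = sv = tu`,
so `s, t` is an idempotent pair; moreover `(s, t)(a, b) = (a)`. Hence if `(s, t) = (c)`, then
`c(a, b) = (a)`, and cancelling `c` shows that `(a, b)` is principal.
-/

open Ideal nonZeroDivisors FractionalIdeal

section CommRing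

variable {R : Type*} [CommRing R]

theorem Ideal.span_pair_mul_span_pair_one_sub_eq {a b : R} (h : a * (1 - a) ∈ span {b}) :
    span {a, b} * span {b, 1 - a} = span {b} := by
  obtain ⟨r, hr⟩ := mem_span_singleton'.mp h
  refine le_antisymm (mul_le.mpr fun x hx y hy => ?_) ?_
  · obtain ⟨p, q, rfl⟩ := mem_span_pair.mp hx
    obtain ⟨p', q', rfl⟩ := mem_span_pair.mp hy
    exact mem_span_singleton'.mpr ⟨p * p' * a + p * q' * r + q * p' * b + q * q' * (1 - a),
      by linear_combination (p * q') * hr⟩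
  · rw [span_singleton_le_iff_mem]
    convert add_mem (mul_mem_mul (subset_span (by simp) : a ∈ span {a, b})
      (subset_span (by simp) : b ∈ span {b, 1 - a}))
      (mul_mem_mul (subset_span (by simp) : b ∈ span {a, b})
      (subset_span (by simp) : 1 - a ∈ span {b, 1 - a})) using 1
    ring

theorem Ideal.span_pair_mul_span_pair_eq_span_singleton {a b s t u v : R} (hsv : s + v = 1)
    (hsu : s * b = u * a) (htv : t * b = v * a) :
    span {s, t} * span {a, b} = span {a} := by
  refine le_antisymm (mul_le.mpr fun x hx y hy => ?_) ?_
  · obtain ⟨p, q, rfl⟩ := mem_span_pair.mp hx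
    obtain ⟨p', q', rfl⟩ := mem_span_pair.mp hy
    exact mem_span_singleton'.mpr ⟨p * p' * s + p * q' * u + q * p' * t + q * q' * v,
      by linear_combination (-(p * q')) * hsu - (q * q') * htv⟩
  · rw [span_singleton_le_iff_mem]
    convert add_mem (mul_mem_mul (subset_span (by simp) : s ∈ span {s, t})
      (subset_span (by simp) : a ∈ span {a, b}))
      (mul_mem_mul (subset_span (by simp) : t ∈ span {s, t})
      (subset_span (by simp) : b ∈ span {a, b})) using 1
    linear_combination (-a) * hsv - htv

end CommRing

section IsDomain

variable {R : Type*} [CommRing R] [IsDomain R]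

theorem Ideal.isPrincipal_of_span_singleton_mul_eq {I : Ideal R} {a c : R} (ha : a ≠ 0)
    (h : span {c} * I = span {a}) : I.IsPrincipal := by
  obtain ⟨z, -, rfl⟩ := mem_span_singleton_mul.mp (h ▸ mem_span_singleton_self a)
  refine ⟨z, (span_singleton_mul_right_inj (left_ne_zero_of_mul ha)).mp ?_⟩
  rw [h, span_singleton_mul_span_singleton]

theorem isIdemPair_of_mul_eq {a b s t u v : R} (ha : a ≠ 0) (hsv : s + v = 1)
    (hsu : s * b = u * a) (htv : t * b = v * a) : IsIdemPair s t :=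
  Or.inl <| mem_span_singleton'.mpr ⟨u, mul_left_cancel₀ ha <| by
    linear_combination (a * s) * hsv - t * hsu + s * htv⟩

end IsDomain

section FractionRing

variable {R K : Type*} [CommRing R] [CommRing K] [Algebra R K] [IsFractionRing R K]

theorem exists_mul_eq_of_isUnit_coeIdeal_span_pair {a b : R}
    (h : IsUnit (span {a, b} : FractionalIdeal R⁰ K)) :
    ∃ s t u v : R, s + v = 1 ∧ s * b = u * a ∧ t * b = v * a := by
  obtain ⟨J, hJ⟩ := h.exists_right_inv
  have hspan : (span {a, b} : FractionalIdeal R⁰ K) =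
      spanSingleton R⁰ (algebraMap R K a) + spanSingleton R⁰ (algebraMap R K b) := by
    rw [span_insert, coeIdeal_sup, coeIdeal_span_singleton, coeIdeal_span_singleton]
  have hone : (1 : K) ∈ spanSingleton R⁰ (algebraMap R K a) * J +
      spanSingleton R⁰ (algebraMap R K b) * J := by
    rw [← add_mul, ← hspan, hJ]
    exact one_mem_one _
  obtain ⟨_, hx, _, hy, hxy⟩ := (mem_add _ _ _).mp hone
  obtain ⟨x, hxJ, rfl⟩ := mem_singleton_mul.mp hx
  obtain ⟨y, hyJ, rfl⟩ := mem_singleton_mul.mp hy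
  have integral : ∀ z ∈ span {a, b}, ∀ w ∈ J, ∃ e : R, algebraMap R K e = algebraMap R K z * w :=
    fun z hz w hw => (mem_one_iff _).mp (hJ ▸ mul_mem_mul (mem_coeIdeal_of_mem _ hz) hw)
  obtain ⟨s, hs⟩ := integral a (subset_span (by simp)) x hxJ
  obtain ⟨t, ht⟩ := integral a (subset_span (by simp)) y hyJ
  obtain ⟨u, hu⟩ := integral b (subset_span (by simp)) x hxJ
  obtain ⟨v, hv⟩ := integral b (subset_span (by simp)) y hyJ
  refine ⟨s, t, u, v, ?_, ?_, ?_⟩ <;> apply IsFractionRing.injective R K <;>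
    simp only [map_add, map_mul, map_one, hs, ht, hu, hv]
  · exact hxy
  all_goals ring

theorem IsPRINC.isPrincipal_span_pair [IsDomain R] (hR : IsPRINC R) {a b : R}
    (h : IsUnit (span {a, b} : FractionalIdeal R⁰ K)) :
    (span {a, b}).IsPrincipal := by
  rcases eq_or_ne a 0 with rfl | ha
  · exact ⟨b, Submodule.span_insert_zero⟩
  obtain ⟨s, t, u, v, hsv, hsu, htv⟩ := exists_mul_eq_of_isUnit_coeIdeal_span_pair h
  obtain ⟨c, hc⟩ := hR s t (isIdemPair_of_mul_eq ha hsv hsu htv)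
  refine isPrincipal_of_span_singleton_mul_eq (c := c) ha ?_
  rw [← show span {s, t} = span {c} from hc]
  exact span_pair_mul_span_pair_eq_span_singleton hsv hsu htv

end FractionRing

section Field

variable {R K : Type*} [CommRing R] [Field K] [Algebra R K] [IsFractionRing R K]

theorem isUnit_coeIdeal_of_mul_eq_span_singleton {I J : Ideal R} {b : R} (hb : b ≠ 0)
    (h : I * J = span {b}) : IsUnit (I : FractionalIdeal R⁰ K) := by
  have hb' : algebraMap R K b ≠ 0 := IsFractionRing.to_map_eq_zero_iff.not.mpr hb
  refine isUnit_of_mul_isUnit_left (y := (J : FractionalIdeal R⁰ K)) ?_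
  rw [← coeIdeal_mul, h, coeIdeal_span_singleton]
  exact .of_mul_eq_one (spanSingleton R⁰ (algebraMap R K b)⁻¹) <| by
    rw [spanSingleton_mul_spanSingleton, mul_inv_cancel₀ hb', spanSingleton_one]

theorem isPrincipal_span_pair_of_mem_span_singleton
    (hR : ∀ a b : R, IsUnit (span {a, b} : FractionalIdeal R⁰ K) →
      (span {a, b}).IsPrincipal) {a b : R} (hab : a * (1 - a) ∈ span {b}) :
    (span {a, b}).IsPrincipal := by
  rcases eq_or_ne b 0 with rfl | hb
  · exact ⟨a, by rw [span_pair_comm]; exact Submodule.span_insert_zero⟩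
  exact hR a b <|
    isUnit_coeIdeal_of_mul_eq_span_singleton hb (span_pair_mul_span_pair_one_sub_eq hab)

end Field

theorem stmt2 {R : Type*} [CommRing R] [IsDomain R] :
    IsPRINC R ↔
      ∀ a b : R, IsUnit ((Ideal.span {a, b} : Ideal R) :
          FractionalIdeal (nonZeroDivisors R) (FractionRing R)) →
        (Ideal.span {a, b}).IsPrincipal := by
  refine ⟨fun hR a b => hR.isPrincipal_span_pair, fun hR a b hab => ?_⟩
  rcases hab with hab | hba
  · exact isPrincipal_span_pair_of_mem_span_singleton hR hab
  · rw [span_pair_comm]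
    exact isPrincipal_span_pair_of_mem_span_singleton hR hba
end

section
/- A Prüfer domain R is a PRINC domain if and only if R is a Bézout domain. -/
/-- A Prüfer domain: every nonzero finitely generated ideal is invertible. -/
def IsPrufer (R : Type*) [CommRing R] [IsDomain R] : Prop :=
  ∀ I : Ideal R, I ≠ ⊥ → I.FG →
    IsUnit (I : FractionalIdeal (nonZeroDivisors R) (FractionRing R))

open Ideal in
theorem Ideal.isPrincipal_of_mul_span_singleton_eq {R : Type*} [CommRing R] [IsDomain R]
    {I : Ideal R} {a c : R} (ha : a ≠ 0) (h : I * span {c} = span {a}) : I.IsPrincipal := by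
  obtain ⟨d, -, rfl⟩ := mem_mul_span_singleton.mp (h ▸ mem_span_singleton_self a)
  have hc : c ≠ 0 := right_ne_zero_of_mul ha
  rw [← span_singleton_mul_span_singleton, span_singleton_mul_left_inj hc] at h
  exact ⟨d, h⟩

open Ideal Pointwise in
theorem Ideal.span_pair_mul_span_pair_eq_span_singleton_s3 {R : Type*} [CommRing R]
    {a b e f g h : R} (hef : e + f = 1) (hbe : b * e = a * h) (hbg : b * g = a * f) :
    span {a, b} * span {e, g} = span {a} := by
  rw [span_mul_span']
  apply le_antisymm
  · rw [span_le]
    rintro _ ⟨x, hx, y, hy, rfl⟩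
    simp only [Set.mem_insert_iff, Set.mem_singleton_iff] at hx hy
    rcases hx with rfl | rfl <;> rcases hy with rfl | rfl
    all_goals simp only [SetLike.mem_coe, mem_span_singleton, hbe, hbg]
    all_goals exact dvd_mul_right _ _
  · have hsum : a * e + b * g = a := by rw [hbg, ← mul_add, hef, mul_one]
    have hmem : a * e + b * g ∈ span ({a, b} * {e, g}) :=
      add_mem (subset_span (Set.mul_mem_mul (by simp) (by simp)))
        (subset_span (Set.mul_mem_mul (by simp) (by simp)))
    rwa [hsum, ← span_singleton_le_iff_mem] at hmem

theorem isIdemPair_of_add_eq_one {R : Type*} [CommRing R] {e f g h : R}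
    (hef : e + f = 1) (hgh : e * f = g * h) : IsIdemPair e g :=
  Or.inl (Ideal.mem_span_singleton.mpr ⟨h, by rw [← hgh, ← hef, add_sub_cancel_left]⟩)

open FractionalIdeal nonZeroDivisors in
theorem exists_rankOne_idempotent_of_isUnit_coeIdeal_span_pair {R K : Type*} [CommRing R]
    [Field K] [Algebra R K] [IsFractionRing R K] {a b : R}
    (hI : IsUnit (Ideal.span {a, b} : FractionalIdeal R⁰ K)) :
    ∃ e f g h : R, e + f = 1 ∧ e * f = g * h ∧ b * e = a * h ∧ b * g = a * f := by
  obtain ⟨u, hu⟩ := hI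
  set J : FractionalIdeal R⁰ K := ↑u⁻¹
  have hIJ : (Ideal.span {a, b} : FractionalIdeal R⁰ K) * J = 1 := hu ▸ u.mul_inv
  have hspan : (Ideal.span {a, b} : FractionalIdeal R⁰ K) =
      spanSingleton R⁰ (algebraMap R K a) + spanSingleton R⁰ (algebraMap R K b) := by
    rw [Ideal.span_insert, coeIdeal_sup, coeIdeal_span_singleton, coeIdeal_span_singleton]
  have hone : (1 : K) ∈ spanSingleton R⁰ (algebraMap R K a) * J +
      spanSingleton R⁰ (algebraMap R K b) * J := by
    rw [← add_mul, ← hspan, hIJ]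
    exact one_mem_one _
  rw [← mem_coe, coe_add] at hone
  obtain ⟨_, hx, _, hy, hxy⟩ := Submodule.mem_sup.mp hone
  obtain ⟨x, hxJ, rfl⟩ := mem_singleton_mul.mp hx
  obtain ⟨y, hyJ, rfl⟩ := mem_singleton_mul.mp hy
  have integral : ∀ z ∈ ({a, b} : Set R), ∀ w ∈ J,
      ∃ r : R, algebraMap R K r = algebraMap R K z * w := by
    intro z hz w hw
    rw [← mem_one_iff, ← hIJ]
    exact mul_mem_mul (mem_coeIdeal_of_mem _ (Ideal.subset_span hz)) hw
  obtain ⟨e, he⟩ := integral a (by simp) x hxJ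
  obtain ⟨f, hf⟩ := integral b (by simp) y hyJ
  obtain ⟨g, hg⟩ := integral a (by simp) y hyJ
  obtain ⟨h, hh⟩ := integral b (by simp) x hxJ
  refine ⟨e, f, g, h, ?_, ?_, ?_, ?_⟩ <;> apply IsFractionRing.injective R K <;>
    simp only [map_add, map_mul, map_one, he, hf, hg, hh, ← hxy] <;> ring

theorem stmt3 {R : Type*} [CommRing R] [IsDomain R] (hR : IsPrufer R) :
    IsPRINC R ↔ IsBezout R := by
  refine ⟨fun hP => ?_, fun _ a b _ => IsBezout.span_pair_isPrincipal a b⟩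
  refine IsBezout.iff_span_pair_isPrincipal.mpr fun a b => ?_
  rcases eq_or_ne a 0 with rfl | ha
  · rw [Ideal.span_insert_zero]
    exact ⟨b, rfl⟩
  have hI : Ideal.span {a, b} ≠ ⊥ := by simp [ha]
  obtain ⟨e, f, g, h, hef, hgh, hbe, hbg⟩ :=
    exists_rankOne_idempotent_of_isUnit_coeIdeal_span_pair (K := FractionRing R)
      (hR _ hI (Submodule.fg_span (Set.toFinite _)))
  obtain ⟨c, hc⟩ := hP e g (isIdemPair_of_add_eq_one hef hgh)
  have hprod := Ideal.span_pair_mul_span_pair_eq_span_singleton_s3 hef hbe hbg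
  rw [hc] at hprod
  exact Ideal.isPrincipal_of_mul_span_singleton_eq ha hprod
end

section
/- Let D be a PRINC domain with field of fractions Q, let V be a valuation domain containing Q with maximal ideal 𝔐, and let R = D + 𝔐. Then R is a PRINC domain. -/
/-!
Let `a(1 - a) ∈ bR`. If `b ∈ 𝔐`, then `a ∈ 𝔐` or `1 - a ∈ 𝔐`, and elements of `1 + 𝔐` are
units of `R`; so either `1 - a` is a unit and `(a, b) = (b)`, or `a` is a unit and `(a, b) = R`.
If `b ∉ 𝔐`, write `a ≡ d_a` and `b ≡ d_b` modulo `𝔐` with `d_a, d_b ∈ D`. Since `D ∩ 𝔐 = 0`,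
reducing `a(1 - a) ∈ bR` modulo `𝔐` shows that `(d_a, d_b)` is an idempotent pair of `D`,
so `(d_a, d_b)D` is principal. Both `b` and `d_b` are units of `V`, hence `𝔐 ⊆ bR` and
`𝔐 ⊆ d_b R`, and therefore `(a, b)R = (d_a, d_b)R` is the extension of a principal ideal of `D`.
-/

open IsLocalRing

theorem Ideal.span_pair_le_of_sub_mem {A : Type*} [CommRing A] {a b a' b' : A}
    (ha : a - a' ∈ Ideal.span {a', b'}) (hb : b - b' ∈ Ideal.span {a', b'}) :
    Ideal.span {a, b} ≤ Ideal.span {a', b'} := by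
  have ha' : a' ∈ Ideal.span {a', b'} := Ideal.subset_span (by simp)
  have hb' : b' ∈ Ideal.span {a', b'} := Ideal.subset_span (by simp)
  rw [Ideal.span_le, Set.insert_subset_iff, Set.singleton_subset_iff]
  exact ⟨by simpa using add_mem ha ha', by simpa using add_mem hb hb'⟩

theorem Ideal.span_pair_eq_of_sub_mem {A : Type*} [CommRing A] {a b a' b' : A} {N : Ideal A}
    (hN : N ≤ Ideal.span {a, b}) (hN' : N ≤ Ideal.span {a', b'})
    (ha : a - a' ∈ N) (hb : b - b' ∈ N) :
    Ideal.span {a, b} = Ideal.span {a', b'} :=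
  le_antisymm (Ideal.span_pair_le_of_sub_mem (hN' ha) (hN' hb))
    (Ideal.span_pair_le_of_sub_mem (hN (neg_sub a a' ▸ neg_mem ha))
      (hN (neg_sub b b' ▸ neg_mem hb)))

theorem Subring.eq_of_sub_mem_maximalIdeal {V : Type*} [CommRing V] [IsLocalRing V]
    {D : Subring V} (hQ : ∀ d : V, d ∈ D → d ≠ 0 → IsUnit d) {d d' : V} (hd : d ∈ D)
    (hd' : d' ∈ D) (h : d - d' ∈ maximalIdeal V) : d = d' := by
  by_contra hne
  exact (mem_maximalIdeal _).1 h (hQ _ (sub_mem hd hd') (sub_ne_zero.2 hne))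

/-- `R = D + 𝔐`, where `𝔐` is the maximal ideal of the local ring `V`. -/
def IsDPlusM {V : Type*} [CommRing V] [IsLocalRing V] (D R : Subring V) : Prop :=
  ∀ x : V, x ∈ R ↔ ∃ d ∈ D, ∃ m ∈ maximalIdeal V, x = d + m

namespace IsDPlusM

variable {V : Type*} [CommRing V] [IsLocalRing V] {D R : Subring V}

theorem mem_of_sub_mem (hR : IsDPlusM D R) {d x : V} (hd : d ∈ D)
    (hx : x - d ∈ maximalIdeal V) : x ∈ R :=
  (hR x).2 ⟨d, hd, x - d, hx, by ring⟩

theorem le (hR : IsDPlusM D R) : D ≤ R :=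
  fun d hd ↦ hR.mem_of_sub_mem hd (by simp)

theorem exists_sub_mem (hR : IsDPlusM D R) (x : R) : ∃ d : D, (x : V) - d ∈ maximalIdeal V := by
  obtain ⟨d, hd, m, hm, hx⟩ := (hR x).1 x.2
  exact ⟨⟨d, hd⟩, by simpa [hx] using hm⟩

theorem comap_maximalIdeal_le_span_singleton (hR : IsDPlusM D R) {u : R} (hu : IsUnit (u : V)) :
    (maximalIdeal V).comap R.subtype ≤ Ideal.span {u} := by
  intro m hm
  obtain ⟨w, hw⟩ := hu.exists_right_inv
  have hwm : w * m ∈ maximalIdeal V := Ideal.mul_mem_left _ _ hm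
  refine Ideal.mem_span_singleton'.2
    ⟨⟨w * m, hR.mem_of_sub_mem (zero_mem D) (by rwa [sub_zero])⟩, ?_⟩
  ext
  simp only [Subring.coe_mul]
  linear_combination (m : V) * hw

theorem isUnit_of_one_sub_mem (hR : IsDPlusM D R) {x : R}
    (hx : 1 - x ∈ (maximalIdeal V).comap R.subtype) : IsUnit x := by
  have hx : 1 - (x : V) ∈ maximalIdeal V := by simpa using hx
  obtain ⟨w, hw⟩ := (isUnit_of_mem_nonunits_one_sub_self (x : V) hx).exists_right_inv
  have hw1 : w - 1 ∈ maximalIdeal V := by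
    rw [show w - 1 = (1 - x) * w by linear_combination hw]
    exact Ideal.mul_mem_right _ _ hx
  exact IsUnit.of_mul_eq_one ⟨w, hR.mem_of_sub_mem (one_mem D) hw1⟩ (Subtype.ext hw)

theorem isIdemPair_of_sub_mem (hR : IsDPlusM D R) (hQ : ∀ d : V, d ∈ D → d ≠ 0 → IsUnit d)
    {a b : R} {da db : D} (h : a * (1 - a) ∈ Ideal.span {b})
    (ha : (a : V) - da ∈ maximalIdeal V) (hb : (b : V) - db ∈ maximalIdeal V) :
    IsIdemPair da db := by
  obtain ⟨r, hr⟩ := Ideal.mem_span_singleton'.1 h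
  obtain ⟨dr, hdr⟩ := hR.exists_sub_mem r
  refine Or.inl (Ideal.mem_span_singleton'.2 ⟨dr, Subtype.ext ?_⟩)
  refine Subring.eq_of_sub_mem_maximalIdeal hQ (dr * db).2 (da * (1 - da)).2
    (Ideal.Quotient.eq.1 ?_)
  have hr : ((r : V) * b) = a * (1 - a) := by exact_mod_cast congrArg Subtype.val hr
  push_cast
  simpa [← Ideal.Quotient.eq.2 ha, ← Ideal.Quotient.eq.2 hb, ← Ideal.Quotient.eq.2 hdr]
    using congrArg (Ideal.Quotient.mk (maximalIdeal V)) hr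

theorem span_pair_isPrincipal_of_mem (hR : IsDPlusM D R) {a b : R}
    (hb : b ∈ (maximalIdeal V).comap R.subtype) (h : a * (1 - a) ∈ Ideal.span {b}) :
    (Ideal.span {a, b}).IsPrincipal := by
  have hmem : a * (1 - a) ∈ (maximalIdeal V).comap R.subtype :=
    (Ideal.span_singleton_le_iff_mem _).2 hb h
  rcases (Ideal.comap_isPrime R.subtype (maximalIdeal V)).mem_or_mem hmem with ha | ha
  · have hu : IsUnit (1 - a) := hR.isUnit_of_one_sub_mem (by rwa [sub_sub_cancel])
    rw [Ideal.span_insert, sup_eq_right.2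
      ((Ideal.span_singleton_le_iff_mem _).2 ((Ideal.mul_unit_mem_iff_mem _ hu).1 h))]
    exact ⟨b, rfl⟩
  · rw [Ideal.eq_top_of_isUnit_mem _ (Ideal.subset_span (by simp)) (hR.isUnit_of_one_sub_mem ha)]
    exact ⟨1, Ideal.span_singleton_one.symm⟩

theorem span_pair_isPrincipal_of_isUnit (hR : IsDPlusM D R) (hD : IsPRINC D)
    (hQ : ∀ d : V, d ∈ D → d ≠ 0 → IsUnit d) {a b : R}
    (hb : IsUnit (b : V)) (h : a * (1 - a) ∈ Ideal.span {b}) :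
    (Ideal.span {a, b}).IsPrincipal := by
  obtain ⟨da, hda⟩ := hR.exists_sub_mem a
  obtain ⟨db, hdb⟩ := hR.exists_sub_mem b
  have hdb_unit : IsUnit (db : V) := by
    refine hQ _ db.2 fun h0 ↦ ?_
    rw [h0, sub_zero] at hdb
    exact (mem_maximalIdeal _).1 hdb hb
  let ι := Subring.inclusion hR.le
  have hspan : Ideal.span {a, b} = (Ideal.span {da, db}).map ι := by
    rw [Ideal.map_span, Set.image_pair]
    refine Ideal.span_pair_eq_of_sub_mem
      ((hR.comap_maximalIdeal_le_span_singleton hb).trans (Ideal.span_mono (by simp)))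
      ((hR.comap_maximalIdeal_le_span_singleton (u := ι db) hdb_unit).trans
        (Ideal.span_mono (by simp))) ?_ ?_ <;> simpa [ι]
  rw [hspan]
  exact (hD da db (hR.isIdemPair_of_sub_mem hQ h hda hdb)).map_ringHom ι

theorem span_pair_isPrincipal_of_mul_one_sub_mem (hR : IsDPlusM D R) (hD : IsPRINC D)
    (hQ : ∀ d : V, d ∈ D → d ≠ 0 → IsUnit d) {a b : R}
    (h : a * (1 - a) ∈ Ideal.span {b}) : (Ideal.span {a, b}).IsPrincipal := by
  by_cases hb : IsUnit (b : V)
  · exact hR.span_pair_isPrincipal_of_isUnit hD hQ hb h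
  · exact hR.span_pair_isPrincipal_of_mem ((mem_maximalIdeal _).2 hb) h

theorem isPRINC (hR : IsDPlusM D R) (hD : IsPRINC D)
    (hQ : ∀ d : V, d ∈ D → d ≠ 0 → IsUnit d) : IsPRINC R := by
  rintro a b (h | h)
  · exact hR.span_pair_isPrincipal_of_mul_one_sub_mem hD hQ h
  · rw [Set.pair_comm]
    exact hR.span_pair_isPrincipal_of_mul_one_sub_mem hD hQ h

end IsDPlusM

theorem stmt4 {V : Type*} [CommRing V] [IsDomain V] [ValuationRing V]
    (D : Subring V) (hD : IsPRINC D)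
    -- `V` contains the field of fractions of `D`:
    (hQ : ∀ d : V, d ∈ D → d ≠ 0 → IsUnit d)
    -- `R = D + 𝔐`, where `𝔐` is the maximal ideal of `V`:
    (R : Subring V)
    (hR : ∀ x : V, x ∈ R ↔ ∃ d ∈ D, ∃ m ∈ IsLocalRing.maximalIdeal V, x = d + m) :
    IsPRINC R :=
  IsDPlusM.isPRINC hR hD hQ
end

section
/- If an integral domain R is the union of a directed family (join-semilattice under inclusion) of subrings each of which is a PRINC domain, then R is a PRINC domain. -/
/-! An idempotent pair `a, b` of `R` with `a (1 - a) = b c` already lies, together with the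
witness `c`, in one subring `S k` of the directed family. There it is an idempotent pair, so
`(a, b)` is principal in `S k`, and the image of that ideal under the inclusion `S k → R` is
`(a, b)` in `R`. -/

section DirectedSubrings

variable {R ι : Type*} [CommRing R] (S : ι → Subring R)
  (hdir : ∀ i j : ι, ∃ k : ι, S i ≤ S k ∧ S j ≤ S k)
  (hcov : ∀ x : R, ∃ i : ι, x ∈ S i)

include hdir hcov in
theorem Subring.exists_mem_of_directed (a b c : R) :
    ∃ k, a ∈ S k ∧ b ∈ S k ∧ c ∈ S k := by
  obtain ⟨i, hi⟩ := hcov a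
  obtain ⟨j, hj⟩ := hcov b
  obtain ⟨l, hl⟩ := hcov c
  obtain ⟨m, him, hjm⟩ := hdir i j
  obtain ⟨k, hmk, hlk⟩ := hdir m l
  exact ⟨k, hmk (him hi), hmk (hjm hj), hlk hl⟩

include hdir hcov in
theorem span_pair_isPrincipal_of_directed (hprinc : ∀ i : ι, IsPRINC (S i))
    {a b c : R} (habc : a * (1 - a) = b * c) : (Ideal.span {a, b}).IsPrincipal := by
  obtain ⟨k, ha, hb, hc⟩ := Subring.exists_mem_of_directed S hdir hcov a b c
  have hpair : IsIdemPair (⟨a, ha⟩ : S k) ⟨b, hb⟩ :=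
    Or.inl <| Ideal.mem_span_singleton'.mpr ⟨⟨c, hc⟩, Subtype.ext <| by
      simp [habc, mul_comm]⟩
  simpa [Ideal.map_span, Set.image_pair] using
    (hprinc k _ _ hpair).map_ringHom (S k).subtype

end DirectedSubrings

theorem stmt6_general {R : Type*} [CommRing R] {ι : Type*}
    (S : ι → Subring R)
    (hdir : ∀ i j : ι, ∃ k : ι, S i ≤ S k ∧ S j ≤ S k)
    (hprinc : ∀ i : ι, IsPRINC (S i))
    (hcov : ∀ x : R, ∃ i : ι, x ∈ S i) :
    IsPRINC R := by
  rintro a b (h | h) <;> obtain ⟨c, hc⟩ := Ideal.mem_span_singleton'.mp h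
  · exact span_pair_isPrincipal_of_directed S hdir hcov hprinc (hc.symm.trans (mul_comm c b))
  · rw [Set.pair_comm]
    exact span_pair_isPrincipal_of_directed S hdir hcov hprinc (hc.symm.trans (mul_comm c a))

theorem stmt6 {R : Type*} [CommRing R] [IsDomain R] {ι : Type*}
    (S : ι → Subring R)
    (hdir : ∀ i j : ι, ∃ k : ι, S i ≤ S k ∧ S j ≤ S k)
    (hprinc : ∀ i : ι, IsPRINC (S i))
    (hcov : ∀ x : R, ∃ i : ι, x ∈ S i) :
    IsPRINC R :=
  stmt6_general S hdir hprinc hcov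
end

section
/- If the polynomial ring D[X] over an integral domain D is a PRINC domain, then D is a PRINC domain. -/
/-!
`D` is a retract of `D[X]` via `C` and evaluation at `0`. Ring maps send idempotent pairs to
idempotent pairs and principal ideals to principal ideals, so an idempotent pair `a, b` of `D`
becomes one of `D[X]`, whose ideal is principal, and evaluating at `0` carries that ideal
back onto `(a, b)`.
-/

section RingHom

variable {R S : Type*} [CommRing R] [CommRing S]

theorem Ideal.map_span_pair (f : R →+* S) (a b : R) :
    Ideal.map f (Ideal.span {a, b}) = Ideal.span {f a, f b} := by
  rw [Ideal.map_span, Set.image_pair]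

theorem IsIdemPair.map {a b : R} (hab : IsIdemPair a b) (f : R →+* S) :
    IsIdemPair (f a) (f b) := by
  simp only [IsIdemPair, Ideal.mem_span_singleton] at hab ⊢
  exact hab.imp (fun h => by simpa using map_dvd f h) (fun h => by simpa using map_dvd f h)

theorem IsPRINC.of_leftInverse {f : R →+* S} {g : S →+* R} (hgf : Function.LeftInverse g f)
    (hS : IsPRINC S) : IsPRINC R := by
  intro a b hab
  have hprinc := (hS _ _ (hab.map f)).map_ringHom g
  rwa [Ideal.map_span_pair, hgf a, hgf b] at hprinc

end RingHom

theorem stmt7_general {D : Type*} [CommRing D]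
    (h : IsPRINC (Polynomial D)) : IsPRINC D :=
  h.of_leftInverse (f := Polynomial.C) (g := Polynomial.evalRingHom 0) fun _ => Polynomial.eval_C

theorem stmt7 {D : Type*} [CommRing D] [IsDomain D]
    (h : IsPRINC (Polynomial D)) : IsPRINC D :=
  stmt7_general h
end

section
/- If the polynomial ring D[X] over an integral domain D is a PRINC domain, then D is seminormal. Precisely: if α is in the fraction field of D with α² ∈ D and α³ ∈ D but α ∉ D, then the ideal of D[X] generated by (1+α²X²)(1-αX)(1+αX) and α²(1+αX) is generated by an idempotent pair but is not principal. -/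
/-!
Put `β = -α⁻¹`. Both generators vanish at `β`, so a generator `p` of the ideal does too. As `p`
divides the nonzero linear polynomial `α² + α³X`, it is linear, and as it divides a polynomial
with constant term `1`, its constant term `p₀` is a unit. Then `p(β) = p₀ - p₁α⁻¹ = 0` gives
`α = p₁ p₀⁻¹ ∈ D`.
-/

open Polynomial

theorem Polynomial.isUnit_coeff_zero_of_dvd {R : Type*} [CommSemiring R] {p f : R[X]}
    (h : p ∣ f) (hf : IsUnit (f.coeff 0)) : IsUnit (p.coeff 0) :=
  isUnit_of_dvd_unit (_root_.map_dvd constantCoeff h) hf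

theorem Polynomial.eval₂_eq_zero_of_span_pair_eq_span {R S : Type*} [CommSemiring R]
    [CommSemiring S] (φ : R →+* S) (x : S) {f g p : R[X]}
    (hI : Ideal.span {f, g} = Ideal.span {p}) (hf : eval₂ φ x f = 0) (hg : eval₂ φ x g = 0) :
    eval₂ φ x p = 0 := by
  have hle : Ideal.span {f, g} ≤ RingHom.ker (eval₂RingHom φ x) := by
    rw [Ideal.span_le, Set.insert_subset_iff, Set.singleton_subset_iff]
    exact ⟨hf, hg⟩
  exact hle (hI ▸ Ideal.mem_span_singleton_self p)

theorem Polynomial.mem_range_of_eval₂_neg_inv_eq_zero {R K : Type*} [CommRing R] [Field K]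
    (φ : R →+* K) {p : R[X]} {α : K} (hdeg : p.natDegree ≤ 1) (hunit : IsUnit (p.coeff 0))
    (hroot : eval₂ φ (-α⁻¹) p = 0) : α ∈ φ.range := by
  rw [eq_X_add_C_of_natDegree_le_one hdeg] at hroot
  simp only [eval₂_add, eval₂_mul, eval₂_C, eval₂_X] at hroot
  have hp₀ : φ (p.coeff 0) ≠ 0 := (hunit.map φ).ne_zero
  have hα : α ≠ 0 := by
    rintro rfl
    simp [hp₀] at hroot
  refine ⟨p.coeff 1 * ↑hunit.unit⁻¹, ?_⟩
  rw [map_mul, map_units_inv, IsUnit.unit_spec]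
  field_simp at hroot ⊢
  linear_combination -hroot

theorem Polynomial.not_isPrincipal_span_pair {R K : Type*} [CommRing R] [IsDomain R] [Field K]
    (φ : R →+* K) {α : K} (hα : α ∉ φ.range) {f g : R[X]} (hf₀ : IsUnit (f.coeff 0))
    (hg : g ≠ 0) (hg₁ : g.natDegree ≤ 1) (hfα : eval₂ φ (-α⁻¹) f = 0)
    (hgα : eval₂ φ (-α⁻¹) g = 0) : ¬ (Ideal.span {f, g}).IsPrincipal := by
  rintro ⟨p, hp⟩
  rw [Ideal.submodule_span_eq] at hp
  have hpf : p ∣ f := Ideal.mem_span_singleton.mp (hp ▸ Ideal.subset_span (by simp))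
  have hpg : p ∣ g := Ideal.mem_span_singleton.mp (hp ▸ Ideal.subset_span (by simp))
  exact hα <| mem_range_of_eval₂_neg_inv_eq_zero φ
    ((natDegree_le_of_dvd hpg hg).trans hg₁) (isUnit_coeff_zero_of_dvd hpf hf₀)
    (eval₂_eq_zero_of_span_pair_eq_span φ _ hp hfα hgα)

/-- If `α` lies in the fraction field of `D`, with `α² = a2 ∈ D` and `α³ = a3 ∈ D` but
`α ∉ D`, then the ideal of `D[X]` generated by `(1+α²X²)(1-αX)(1+αX) = (1+α²X²)(1-α²X²)`
and `α²(1+αX) = α² + α³X` is generated by an idempotent pair but is not principal;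
in particular `D[X]` PRINC forces `D` seminormal. -/
theorem stmt8 {D : Type*} [CommRing D] [IsDomain D]
    (α : FractionRing D) (a2 a3 : D)
    (h2 : algebraMap D (FractionRing D) a2 = α ^ 2)
    (h3 : algebraMap D (FractionRing D) a3 = α ^ 3)
    (hα : α ∉ (algebraMap D (FractionRing D)).range) :
    IsIdemPair
        ((1 + C a2 * X ^ 2) * ((1 : D[X]) - C a2 * X ^ 2))
        (C a2 + C a3 * X) ∧
      ¬ (Ideal.span {(1 + C a2 * X ^ 2) * ((1 : D[X]) - C a2 * X ^ 2),
          C a2 + C a3 * X}).IsPrincipal := by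
  have hα₀ : α ≠ 0 := fun h ↦ hα ⟨0, by simp [h]⟩
  have ha : a3 ^ 2 = a2 ^ 3 :=
    IsFractionRing.injective D (FractionRing D) (by rw [map_pow, map_pow, h2, h3]; ring)
  have hC : C a3 ^ 2 = (C a2 : D[X]) ^ 3 := by rw [← C_pow, ← C_pow, ha]
  have ha2 : a2 ≠ 0 := by
    rintro rfl
    exact pow_ne_zero 2 hα₀ (by simp [← h2])
  -- `(1 + a2 X²)(1 - a2 X²) = 1 - a2² X⁴` and `(a2 + a3 X)(a2 - a3 X) = a2² (1 - a2 X²)`, as `a3² = a2³`.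
  have hidem : IsIdemPair ((1 + C a2 * X ^ 2) * ((1 : D[X]) - C a2 * X ^ 2)) (C a2 + C a3 * X) :=
    Or.inl <| Ideal.mem_span_singleton.mpr ⟨X ^ 4 * (1 + C a2 * X ^ 2) * (C a2 - C a3 * X),
      by linear_combination X ^ 6 * (1 + C a2 * X ^ 2) * hC⟩
  refine ⟨hidem, ?_⟩
  refine not_isPrincipal_span_pair _ hα (by simp) (fun h ↦ ha2 ?_) (by compute_degree) ?_ ?_
  · simpa using congrArg (coeff · 0) h
  · simp only [eval₂_mul, eval₂_add, eval₂_sub, eval₂_one, eval₂_C, eval₂_X, eval₂_pow, h2]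
    field_simp
    ring
  · simp only [eval₂_add, eval₂_mul, eval₂_C, eval₂_X, h2, h3]
    field_simp
    ring
end

section
/- Let K be a field, D = K[X_i : i ≥ 1] the polynomial ring in countably many indeterminates, and J the ideal generated by the elements X_i − X_{i+1}(1 + X_{i+1}) for i ≥ 1. Then J is a prime ideal of the localization of D at the maximal ideal 𝔐 = (X_i : i ≥ 1); in particular, for each n, the image x_n of X_n in D/J is transcendental over K, so K[x_n] is isomorphic to a polynomial ring K[Z]. -/
/-! Write `p = Y + Y²` and `x m` for the image of `X m` in `D/J`. Since `x m = p (x (m + 1))`, the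
subalgebras `K[x m]` form an increasing chain exhausting `D/J`. Each `x m` is transcendental: an
element of `J` involves only finitely many relations, and for large `N` the evaluation
`X j ↦ p^[N - j] Y` into `K[Y]` kills all of them while sending `q (X m)` to `q ∘ p^[N - m]`,
which is nonzero for `q ≠ 0` by degree. So `D/J` is a directed union of polynomial rings, hence a
domain, and `J ⊆ 𝔐` stays prime in `D_𝔐`. -/

open MvPolynomial

namespace Polynomial

variable (R : Type*) [CommRing R]

noncomputable def addSqIterate : ℕ → R[X]
  | 0 => X
  | k + 1 => addSqIterate k + addSqIterate k ^ 2

variable {R} [IsDomain R]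

theorem natDegree_addSqIterate (k : ℕ) : (addSqIterate R k).natDegree = 2 ^ k := by
  induction k with
  | zero => simp [addSqIterate]
  | succ k ih =>
    have hsq : (addSqIterate R k ^ 2).natDegree = 2 ^ (k + 1) := by
      rw [natDegree_pow, ih, pow_succ, mul_comm]
    rw [addSqIterate, natDegree_add_eq_right_of_natDegree_lt (by rw [hsq, ih]; grind), hsq]

theorem comp_addSqIterate_eq_zero_iff {q : R[X]} {k : ℕ} :
    q.comp (addSqIterate R k) = 0 ↔ q = 0 := by
  refine ⟨fun h => (comp_eq_zero_iff.mp h).resolve_right fun ⟨_, hC⟩ => ?_,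
    fun h => by simp [h]⟩
  have := natDegree_addSqIterate (R := R) k
  rw [hC, natDegree_C] at this
  exact (pow_ne_zero k two_ne_zero) this.symm

end Polynomial

theorem Algebra.isDomain_of_directed_adjoin_transcendental {R A ι : Type*} [CommRing R]
    [IsDomain R] [CommRing A] [Algebra R A] [Nonempty ι] (x : ι → A)
    (hx : ∀ i, Transcendental R (x i)) (hdir : Directed (· ≤ ·) fun i => adjoin R {x i})
    (htop : ⨆ i, adjoin R {x i} = ⊤) : IsDomain A := by
  have := (hx (Classical.arbitrary ι)).infinite
  have hmem (a : A) : ∃ i, a ∈ adjoin R {x i} := Set.mem_iUnion.mp <| by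
    rw [← Subalgebra.coe_iSup_of_directed hdir, htop]
    trivial
  have : NoZeroDivisors A := ⟨fun {a b} hab => by
    obtain ⟨i, ha⟩ := hmem a
    obtain ⟨j, hb⟩ := hmem b
    obtain ⟨k, hik, hjk⟩ := hdir i j
    have := (Polynomial.algEquivOfTranscendental R (x k) (hx k)).symm.toMulEquiv.isDomain
    have hab' : (⟨a, hik ha⟩ : adjoin R {x k}) * ⟨b, hjk hb⟩ = 0 := Subtype.ext hab
    simpa [Subtype.ext_iff] using mul_eq_zero.mp hab'⟩
  exact NoZeroDivisors.to_isDomain A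

namespace AddSqChain

open Filter Polynomial

variable (R : Type*) [CommRing R]

noncomputable def gen (i : ℕ) : MvPolynomial ℕ R := X i - X (i + 1) * (1 + X (i + 1))

noncomputable def chainIdeal : Ideal (MvPolynomial ℕ R) := Ideal.span (Set.range (gen R))

noncomputable def chainEval (N : ℕ) : MvPolynomial ℕ R →ₐ[R] R[X] :=
  MvPolynomial.aeval fun j => addSqIterate R (N - j)

variable {R}

theorem chainEval_gen {N i : ℕ} (hi : i < N) : chainEval R N (gen R i) = 0 := by
  obtain ⟨k, hk⟩ : ∃ k, N - i = k + 1 := ⟨N - (i + 1), by omega⟩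
  simp only [gen, chainEval, map_sub, map_mul, map_add, map_one, MvPolynomial.aeval_X, hk,
    show N - (i + 1) = k by omega, addSqIterate]
  ring

theorem eventually_chainEval_eq_zero {f : MvPolynomial ℕ R} (hf : f ∈ chainIdeal R) :
    ∀ᶠ N in atTop, chainEval R N f = 0 := by
  induction hf using Submodule.span_induction with
  | mem _ h =>
    obtain ⟨i, rfl⟩ := h
    filter_upwards [eventually_gt_atTop i] with N hN using chainEval_gen hN
  | zero => simp
  | add _ _ _ _ hf hg => filter_upwards [hf, hg] with N hf hg; simp [hf, hg]
  | smul _ _ _ hf => filter_upwards [hf] with N hf; simp [hf]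

theorem chainEval_aeval_X (N m : ℕ) (q : R[X]) :
    chainEval R N (Polynomial.aeval (X m) q) = q.comp (addSqIterate R (N - m)) := by
  rw [← Polynomial.aeval_algHom_apply, chainEval, MvPolynomial.aeval_X, comp_eq_aeval]

theorem eq_zero_of_aeval_X_mem_chainIdeal [IsDomain R] {m : ℕ} {q : R[X]}
    (h : Polynomial.aeval (X m) q ∈ chainIdeal R) : q = 0 := by
  obtain ⟨N, hN⟩ := (eventually_chainEval_eq_zero h).exists
  rwa [chainEval_aeval_X, comp_addSqIterate_eq_zero_iff] at hN

theorem transcendental_mk_X [IsDomain R] (m : ℕ) :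
    Transcendental R (Ideal.Quotient.mk (chainIdeal R) (X m)) := by
  refine transcendental_iff.mpr fun q hq => eq_zero_of_aeval_X_mem_chainIdeal (m := m) ?_
  rwa [← Ideal.Quotient.eq_zero_iff_mem, ← Ideal.Quotient.mkₐ_eq_mk R,
    ← Polynomial.aeval_algHom_apply, Ideal.Quotient.mkₐ_eq_mk]

theorem adjoin_mk_X_le_succ (m : ℕ) :
    Algebra.adjoin R {Ideal.Quotient.mk (chainIdeal R) (X m)} ≤
      Algebra.adjoin R {Ideal.Quotient.mk (chainIdeal R) (X (m + 1))} := by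
  set y := Ideal.Quotient.mk (chainIdeal R) (X (m + 1))
  have hx : Ideal.Quotient.mk (chainIdeal R) (X m) = y * (1 + y) := by
    rw [← sub_eq_zero, ← map_one (Ideal.Quotient.mk _), ← map_add, ← map_mul, ← map_sub,
      Ideal.Quotient.eq_zero_iff_mem]
    exact Ideal.subset_span ⟨m, rfl⟩
  have hy := Algebra.self_mem_adjoin_singleton R y
  exact Algebra.adjoin_singleton_le (hx ▸ mul_mem hy (add_mem (one_mem _) hy))

theorem iSup_adjoin_mk_X :
    ⨆ m, Algebra.adjoin R {Ideal.Quotient.mk (chainIdeal R) (X m)} = ⊤ := by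
  rw [← Algebra.adjoin_iUnion, Set.iUnion_singleton_eq_range, ← Ideal.Quotient.mkₐ_eq_mk R,
    Set.range_comp', Algebra.adjoin_image, MvPolynomial.adjoin_range_X, Algebra.map_top,
    AlgHom.range_eq_top]
  exact Ideal.Quotient.mkₐ_surjective R _

theorem chainIdeal_le_span_range_X : chainIdeal R ≤ Ideal.span (Set.range X) := by
  rw [chainIdeal, Ideal.span_le]
  rintro _ ⟨i, rfl⟩
  exact sub_mem (Ideal.subset_span ⟨i, rfl⟩)
    (Ideal.mul_mem_right _ _ (Ideal.subset_span ⟨i + 1, rfl⟩))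

theorem chainIdeal_isPrime [IsDomain R] : (chainIdeal R).IsPrime := by
  rw [← Ideal.Quotient.isDomain_iff_prime]
  exact Algebra.isDomain_of_directed_adjoin_transcendental _ transcendental_mk_X
    (monotone_nat_of_le_succ adjoin_mk_X_le_succ).directed_le iSup_adjoin_mk_X

end AddSqChain

open AddSqChain in
/-- `D = K[X_i : i ≥ 1]` (indices shifted to `ℕ`), `J = (X_i - X_{i+1}(1+X_{i+1}) : i)`,
`𝔐 = (X_i : i)`. Then `J·T` is prime in the localization `T = D_𝔐`; in particular every
`x_n = X_n mod J` is transcendental over `K`, so `K[x_n] ≅ K[Z]`. -/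
theorem stmt11 {K : Type*} [Field K]
    (J M : Ideal (MvPolynomial ℕ K))
    (hJ : J = Ideal.span (Set.range fun i : ℕ => X i - X (i + 1) * (1 + X (i + 1))))
    (hM : M = Ideal.span (Set.range X))
    (hMp : M.IsPrime) :
    (J.map (algebraMap (MvPolynomial ℕ K)
        (Localization (M.primeCompl (hp := hMp))))).IsPrime ∧
    ∀ n : ℕ, Transcendental K (Ideal.Quotient.mk J (X n)) ∧
      Nonempty ((Algebra.adjoin K {Ideal.Quotient.mk J (X n)}) ≃ₐ[K] Polynomial K) := by
  obtain rfl : J = chainIdeal K := hJ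
  refine ⟨?_, fun n => ⟨transcendental_mk_X n,
    ⟨(Polynomial.algEquivOfTranscendental K _ (transcendental_mk_X n)).symm⟩⟩⟩
  refine IsLocalization.isPrime_of_isPrime_disjoint (M.primeCompl (hp := hMp)) _ _
    chainIdeal_isPrime (Set.disjoint_left.mpr fun f hf hfJ => hf ?_)
  exact hM ▸ chainIdeal_le_span_range_X hfJ
end

section
/- Let R be an integral domain which is the union of an increasing chain of subrings R_n = D[x_n], each a polynomial ring over a domain D, where x_n = x_{n+1}(1 + x_{n+1}) for all n ≥ 1. Then for any n, the element x_1 factors as x_1 = x_m · ∏_{i=2}^{m} (1 + x_i) with all m factors pairwise comaximal in R, for every m ≥ 2. -/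
/-!
Unwinding `x n = x (n + 1) * (1 + x (n + 1))` from `n = 1` telescopes into the factorization of
`x 1`, and shows that `x j * (1 + x j)` divides `x i` whenever `i < j`. Comaximality then comes
from the observation that `b ∣ a` makes `1 + a ≡ 1` modulo `b`, so `b` and `1 + a` are coprime.
-/

theorem isCoprime_one_add_of_dvd {R : Type*} [CommRing R] {a b : R} (h : b ∣ a) :
    IsCoprime b (1 + a) := by
  obtain ⟨c, rfl⟩ := h
  exact isCoprime_one_right.add_mul_left_right c

theorem Ideal.span_pair_eq_top_of_isCoprime {R : Type*} [CommSemiring R] {a b : R}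
    (h : IsCoprime a b) : Ideal.span {a, b} = ⊤ :=
  (Ideal.eq_top_iff_one _).mpr (Ideal.mem_span_pair.mpr h)

section Chain

variable {R : Type*} [CommRing R] {x : ℕ → R}

theorem dvd_of_chain (hx : ∀ n, 1 ≤ n → x n = x (n + 1) * (1 + x (n + 1)))
    {i j : ℕ} (hi : 1 ≤ i) (hij : i ≤ j) : x j ∣ x i := by
  induction j, hij using Nat.le_induction with
  | base => exact dvd_rfl
  | succ n hn ih => exact (Dvd.intro _ (hx n (hi.trans hn)).symm).trans ih

theorem mul_one_add_dvd_of_chain (hx : ∀ n, 1 ≤ n → x n = x (n + 1) * (1 + x (n + 1)))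
    {i j : ℕ} (hi : 1 ≤ i) (hij : i < j) : x j * (1 + x j) ∣ x i := by
  obtain ⟨k, rfl⟩ := Nat.exists_eq_add_of_lt hij
  rw [← hx (i + k) (hi.trans (Nat.le_add_right _ _))]
  exact dvd_of_chain hx hi (Nat.le_add_right _ _)

theorem eq_mul_prod_Icc_of_chain (hx : ∀ n, 1 ≤ n → x n = x (n + 1) * (1 + x (n + 1)))
    {m : ℕ} (hm : 1 ≤ m) : x 1 = x m * ∏ i ∈ Finset.Icc 2 m, (1 + x i) := by
  induction m, hm using Nat.le_induction with
  | base => simp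
  | succ n hn ih =>
    rw [ih, Finset.prod_Icc_succ_top (by omega), hx n hn]
    ring

end Chain

theorem stmt12_general {R : Type*} [CommRing R]
    (x : ℕ → R) (hx : ∀ n, 1 ≤ n → x n = x (n + 1) * (1 + x (n + 1))) :
    ∀ m, 2 ≤ m →
      x 1 = x m * ∏ i ∈ Finset.Icc 2 m, (1 + x i) ∧
      (∀ i, 2 ≤ i → i ≤ m → Ideal.span {x m, 1 + x i} = ⊤) ∧
      (∀ i j, 2 ≤ i → i < j → j ≤ m → Ideal.span {1 + x i, 1 + x j} = ⊤) := by
  intro m hm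
  refine ⟨eq_mul_prod_Icc_of_chain hx (by omega), fun i hi him => ?_,
    fun i j hi hij _ => ?_⟩
  · exact Ideal.span_pair_eq_top_of_isCoprime
      (isCoprime_one_add_of_dvd (dvd_of_chain hx (by omega) him))
  · have hdvd : 1 + x j ∣ x i :=
      (Dvd.intro_left _ rfl).trans (mul_one_add_dvd_of_chain hx (by omega) hij)
    exact Ideal.span_pair_eq_top_of_isCoprime (isCoprime_one_add_of_dvd hdvd).symm

theorem stmt12 {R : Type*} [CommRing R] [IsDomain R]
    (x : ℕ → R) (hx : ∀ n, 1 ≤ n → x n = x (n + 1) * (1 + x (n + 1))) :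
    ∀ m, 2 ≤ m →
      x 1 = x m * ∏ i ∈ Finset.Icc 2 m, (1 + x i) ∧
      (∀ i, 2 ≤ i → i ≤ m → Ideal.span {x m, 1 + x i} = ⊤) ∧
      (∀ i j, 2 ≤ i → i < j → j ≤ m → Ideal.span {1 + x i, 1 + x j} = ⊤) :=
  stmt12_general x hx
end

section
/- Let R be a unique comaximal factorization domain (UCFD) and b a nonzero nonunit of R. Then all complete comaximal factorizations of b have the same number of factors; consequently, an integral domain R = ∪ R_n as in the chain construction with x_n = x_{n+1}(1+x_{n+1}) cannot be a UCFD, since x_1 admits complete comaximal factorizations of arbitrarily many factors. -/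
/-- `c, d` are comaximal. -/
def Comaximal {R : Type*} [CommRing R] (c d : R) : Prop :=
  Ideal.span {c, d} = ⊤

/-- A nonzero nonunit which is not a product of two comaximal nonunits. -/
def PseudoIrreducible {R : Type*} [CommRing R] (b : R) : Prop :=
  b ≠ 0 ∧ ¬ IsUnit b ∧ ∀ c d : R, ¬ IsUnit c → ¬ IsUnit d → Comaximal c d → b ≠ c * d

/-- `l` is a complete comaximal factorization of `b`. -/
def IsCompleteComaximalFactorization {R : Type*} [CommRing R] (b : R) (l : List R) : Prop :=
  b = l.prod ∧ (∀ p ∈ l, PseudoIrreducible p) ∧ l.Pairwise Comaximal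

/-- A unique comaximal factorization domain: every nonzero nonunit has a complete
comaximal factorization, unique up to order and units. -/
def IsUCFD (R : Type*) [CommRing R] : Prop :=
  (∀ b : R, b ≠ 0 → ¬ IsUnit b → ∃ l : List R, IsCompleteComaximalFactorization b l) ∧
  ∀ (b : R) (l₁ l₂ : List R), IsCompleteComaximalFactorization b l₁ →
    IsCompleteComaximalFactorization b l₂ →
    ∃ l₂' : List R, l₂.Perm l₂' ∧ List.Forall₂ Associated l₁ l₂'

/-!
A UCFD identifies any two complete comaximal factorizations of `b` up to order and units, so
they have the same length. In the chain `x n = x (n+1) * (1 + x (n+1))` every element is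
comaximal to `1` plus itself, while `x n` and `1 + x (n+1)` divide all earlier `x m`; hence
`x 1 = x n * (1 + x 2) ⋯ (1 + x n)` is a product of `n` pairwise comaximal nonunits. Refining
each factor into a complete comaximal factorization gives complete comaximal factorizations of
`x 1` with at least `n` factors for every `n`, which is impossible in a UCFD.
-/

theorem comaximal_iff_isCoprime {R : Type*} [CommRing R] {c d : R} :
    Comaximal c d ↔ IsCoprime c d := by
  rw [Comaximal, Ideal.span_insert, Ideal.sup_eq_top_iff_isCoprime]

theorem IsCoprime.list_prod_right {R : Type*} [CommSemiring R] {x : R} {l : List R}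
    (h : ∀ y ∈ l, IsCoprime x y) : IsCoprime x l.prod := by
  induction l with
  | nil => exact isCoprime_one_right
  | cons y l ih =>
    rw [List.prod_cons]
    exact (h y List.mem_cons_self).mul_right (ih fun z hz => h z (List.mem_cons_of_mem y hz))

def IsCFD (R : Type*) [CommRing R] : Prop :=
  ∀ b : R, b ≠ 0 → ¬ IsUnit b → ∃ l : List R, IsCompleteComaximalFactorization b l

section Factorization

variable {R : Type*} [CommRing R]

theorem IsUCFD.isCFD (h : IsUCFD R) : IsCFD R := h.1

theorem IsUCFD.length_eq (h : IsUCFD R) {b : R} {l₁ l₂ : List R}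
    (h₁ : IsCompleteComaximalFactorization b l₁) (h₂ : IsCompleteComaximalFactorization b l₂) :
    l₁.length = l₂.length := by
  obtain ⟨l₂', hperm, hassoc⟩ := h.2 b l₁ l₂ h₁ h₂
  rw [hassoc.length_eq, hperm.length_eq]

namespace IsCompleteComaximalFactorization

theorem ne_nil {b : R} {l : List R} (hf : IsCompleteComaximalFactorization b l)
    (hb : ¬ IsUnit b) : l ≠ [] := by
  rintro rfl
  exact hb (hf.1 ▸ isUnit_one)

theorem append {a b : R} {l₁ l₂ : List R} (h₁ : IsCompleteComaximalFactorization a l₁)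
    (h₂ : IsCompleteComaximalFactorization b l₂) (hab : Comaximal a b) :
    IsCompleteComaximalFactorization (a * b) (l₁ ++ l₂) := by
  refine ⟨by rw [List.prod_append, ← h₁.1, ← h₂.1], ?_, ?_⟩
  · intro p hp
    rcases List.mem_append.mp hp with hp | hp
    exacts [h₁.2.1 p hp, h₂.2.1 p hp]
  · refine List.pairwise_append.mpr ⟨h₁.2.2, h₂.2.2, fun p hp q hq => ?_⟩
    have hpa : p ∣ a := h₁.1 ▸ List.dvd_prod hp
    have hqb : q ∣ b := h₂.1 ▸ List.dvd_prod hq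
    exact comaximal_iff_isCoprime.mpr <|
      ((comaximal_iff_isCoprime.mp hab).of_isCoprime_of_dvd_left hpa).of_isCoprime_of_dvd_right hqb

end IsCompleteComaximalFactorization

theorem IsCFD.exists_factorization_length_ge (hR : IsCFD R) {l : List R}
    (hl : ∀ p ∈ l, p ≠ 0 ∧ ¬ IsUnit p) (hpw : l.Pairwise Comaximal) :
    ∃ l', IsCompleteComaximalFactorization l.prod l' ∧ l.length ≤ l'.length := by
  induction l with
  | nil => exact ⟨[], ⟨rfl, by simp, List.Pairwise.nil⟩, le_rfl⟩
  | cons a t ih =>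
    obtain ⟨ha0, hau⟩ := hl a List.mem_cons_self
    obtain ⟨hat, htpw⟩ := List.pairwise_cons.mp hpw
    obtain ⟨la, hla⟩ := hR a ha0 hau
    obtain ⟨lt, hlt, hlen⟩ := ih (fun p hp => hl p (List.mem_cons_of_mem a hp)) htpw
    have hcop : Comaximal a t.prod := comaximal_iff_isCoprime.mpr <|
      IsCoprime.list_prod_right fun q hq => comaximal_iff_isCoprime.mp (hat q hq)
    refine ⟨la ++ lt, List.prod_cons (a := a) ▸ hla.append hlt hcop, ?_⟩
    have := List.length_pos_iff.mpr (hla.ne_nil hau)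
    simp only [List.length_cons, List.length_append]
    omega

end Factorization

namespace Chain

variable {R : Type*} [CommRing R] {x : ℕ → R}

def factors (x : ℕ → R) (n : ℕ) : List R :=
  x n :: (List.range n).map fun m => 1 + x (m + 1)

variable (hx : ∀ n, x n = x (n + 1) * (1 + x (n + 1)))
include hx

theorem dvd_of_le {m n : ℕ} (hmn : m ≤ n) : x n ∣ x m := by
  induction n, hmn using Nat.le_induction with
  | base => exact dvd_rfl
  | succ n _ ih => exact (Dvd.intro _ (hx n).symm).trans ih

theorem isCoprime_one_add_of_le {m n : ℕ} (hmn : m ≤ n) : IsCoprime (x n) (1 + x m) := by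
  have hm : IsCoprime (x m) (1 + x m) := ⟨-1, (1 : R), by ring⟩
  exact hm.of_isCoprime_of_dvd_left (dvd_of_le hx hmn)

theorem factors_prod (n : ℕ) : (factors x n).prod = x 0 := by
  induction n with
  | zero => simp [factors]
  | succ n ih =>
    simp only [factors, List.prod_cons, List.range_succ, List.map_append, List.prod_append,
      List.map_singleton, List.prod_nil] at ih ⊢
    rw [← ih, hx n]
    ring

theorem factors_pairwise (n : ℕ) : (factors x n).Pairwise Comaximal := by
  refine List.pairwise_cons.mpr ⟨?_, ?_⟩
  · simp only [List.mem_map, List.mem_range]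
    rintro _ ⟨m, hm, rfl⟩
    exact comaximal_iff_isCoprime.mpr (isCoprime_one_add_of_le hx hm)
  · refine List.pairwise_map.mpr (List.pairwise_lt_range.imp fun {a b} hab => ?_)
    have hdvd : 1 + x (b + 1) ∣ x b := Dvd.intro_left _ (hx b).symm
    exact comaximal_iff_isCoprime.mpr
      ((isCoprime_one_add_of_le hx hab).symm.of_isCoprime_of_dvd_right hdvd)

theorem not_isUCFD (hxu : ∀ n, ¬ IsUnit (x n)) (hxu' : ∀ n, ¬ IsUnit (1 + x (n + 1)))
    (hx0 : x 0 ≠ 0) : ¬ IsUCFD R := by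
  intro hR
  obtain ⟨l₀, hl₀⟩ := hR.isCFD (x 0) hx0 (hxu 0)
  have hne : ∀ p ∈ factors x l₀.length, p ≠ 0 ∧ ¬ IsUnit p := by
    intro p hp
    refine ⟨fun hp0 => hx0 ?_, ?_⟩
    · rw [← factors_prod hx, List.prod_eq_zero (hp0 ▸ hp)]
    · simp only [factors, List.mem_cons, List.mem_map] at hp
      rcases hp with rfl | ⟨m, -, rfl⟩
      exacts [hxu _, hxu' m]
  obtain ⟨l, hl, hlen⟩ := hR.isCFD.exists_factorization_length_ge hne (factors_pairwise hx _)
  rw [factors_prod hx] at hl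
  have := hR.length_eq hl hl₀
  simp only [factors, List.length_cons, List.length_map, List.length_range] at hlen
  omega

end Chain

theorem stmt13_general {R : Type*} [CommRing R] :
    (IsUCFD R → ∀ (b : R), b ≠ 0 → ¬ IsUnit b →
      ∀ l₁ l₂ : List R, IsCompleteComaximalFactorization b l₁ →
        IsCompleteComaximalFactorization b l₂ → l₁.length = l₂.length) ∧
    (∀ x : ℕ → R, (∀ n, 1 ≤ n → x n = x (n + 1) * (1 + x (n + 1))) →
      (∀ n, 1 ≤ n → ¬ IsUnit (x n)) → (∀ n, 2 ≤ n → ¬ IsUnit (1 + x n)) →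
      x 1 ≠ 0 → ¬ IsUCFD R) :=
  ⟨fun hR _ _ _ _ _ h₁ h₂ => hR.length_eq h₁ h₂,
   fun x hx hxu hxu' hx1 => Chain.not_isUCFD (x := fun n => x (n + 1))
    (fun n => hx (n + 1) n.succ_pos) (fun n => hxu (n + 1) n.succ_pos)
    (fun n => hxu' (n + 2) (by omega)) hx1⟩

theorem stmt13 {R : Type*} [CommRing R] [IsDomain R] :
    (IsUCFD R → ∀ (b : R), b ≠ 0 → ¬ IsUnit b →
      ∀ l₁ l₂ : List R, IsCompleteComaximalFactorization b l₁ →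
        IsCompleteComaximalFactorization b l₂ → l₁.length = l₂.length) ∧
    (∀ x : ℕ → R, (∀ n, 1 ≤ n → x n = x (n + 1) * (1 + x (n + 1))) →
      (∀ n, 1 ≤ n → ¬ IsUnit (x n)) → (∀ n, 2 ≤ n → ¬ IsUnit (1 + x n)) →
      x 1 ≠ 0 → ¬ IsUCFD R) :=
  stmt13_general
end

section
/- Let K be an algebraically closed field of characteristic χ, and Γ a subgroup of ℚ divisible by a prime p ≠ χ. Then the group algebra R = K[X; Γ] contains no pseudo-irreducible elements: every nonzero nonunit of R is a product of two comaximal nonunits. -/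
/-!
The support of `b` is finite, so it lies in a cyclic subgroup `ℤ g` of `Γ`, and `g = p h` with
`h ∈ Γ`. Writing `Y = X^h`, this gives `b = u · q(Y^p)` with `u` a monomial unit and `q` a
polynomial with `q(0) ≠ 0`, nonconstant because `b` is not a unit. A root `z ≠ 0` of `q` has `p`
distinct `p`-th roots (`p ≠ char K`), so `Q = q(Y^p)` has two distinct roots `r ≠ ζ r`. Splitting
off the full power of `Y - r` writes `Q = c d` with `c, d` coprime and both nonconstant; their
images in `K[X; Γ]` are comaximal, and they are not units because every unit of the group algebra
of an ordered group is a monomial.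
-/

open Polynomial LaurentPolynomial Finset AddMonoidAlgebra

namespace AddMonoidAlgebra

theorem not_isUnit_of_one_lt_card_support {R A : Type*} [Semiring R] [NoZeroDivisors R]
    [AddMonoid A] [TwoUniqueSums A] {f : AddMonoidAlgebra R A} (hf : 1 < #f.coeff.support) :
    ¬ IsUnit f := by
  intro hunit
  obtain ⟨g, hfg⟩ := hunit.exists_right_inv
  have hg : g.coeff.support.Nonempty := by
    refine Finsupp.support_nonempty_iff.2 fun h0 => ?_
    rw [coeff_eq_zero.1 h0, mul_zero] at hfg
    have := subsingleton_of_zero_eq_one hfg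
    simp [Subsingleton.elim f 0] at hf
  obtain ⟨⟨a₁, b₁⟩, h₁, ⟨a₂, b₂⟩, h₂, hne, hu₁, hu₂⟩ :=
    TwoUniqueSums.uniqueAdd_of_one_lt_card (hf.trans_le (Nat.le_mul_of_pos_right _ hg.card_pos))
  rw [Finset.mem_product] at h₁ h₂
  -- a monomial of `f * g = 1` reached in only one way survives, so it is the monomial `0`
  have hsum : ∀ {a b}, a ∈ f.coeff.support → b ∈ g.coeff.support →
      UniqueAdd f.coeff.support g.coeff.support a b → a + b = 0 := by
    intro a b ha hb hu
    refine Finset.mem_zero.1 (support_coeff_one_subset (k := R) ?_)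
    rw [← hfg, Finsupp.mem_support_iff, coeff_mul_add_of_uniqueAdd hu]
    exact mul_ne_zero (Finsupp.mem_support_iff.1 ha) (Finsupp.mem_support_iff.1 hb)
  obtain ⟨rfl, rfl⟩ := hu₁ h₂.1 h₂.2 ((hsum h₂.1 h₂.2 hu₂).trans (hsum h₁.1 h₁.2 hu₁).symm)
  exact hne rfl

theorem isUnit_single {R A : Type*} [Semiring R] [AddGroup A] (a : A) {k : R} (hk : IsUnit k) :
    IsUnit (single a k : AddMonoidAlgebra R A) := by
  obtain ⟨u, rfl⟩ := hk
  refine ⟨⟨single a u, single (-a) ↑u⁻¹, ?_, ?_⟩, rfl⟩ <;>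
    simp [single_mul_single, ← one_def]

theorem mem_range_mapDomainRingHom_of_support_subset {R M N : Type*} [Semiring R] [AddMonoid M]
    [AddMonoid N] (ι : M →+ N) {b : AddMonoidAlgebra R N}
    (hb : ↑b.coeff.support ⊆ Set.range ι) : b ∈ Set.range (mapDomainRingHom R ι) := by
  have : b.coeff ∈ (Finsupp.supported R R Set.univ).map (Finsupp.lmapDomain R R ι) := by
    rwa [Finsupp.lmapDomain_supported, Set.image_univ]
  obtain ⟨F, -, hF⟩ := this
  exact ⟨ofCoeff F, AddMonoidAlgebra.ext hF⟩

theorem not_isUnit_mapDomainRingHom_toLaurent {R Γ : Type*} [Semiring R] [NoZeroDivisors R]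
    [AddMonoid Γ] [TwoUniqueSums Γ] {ι : ℤ →+ Γ} (hι : Function.Injective ι) {q : R[X]}
    (h0 : q.coeff 0 ≠ 0) (hq : 0 < q.natDegree) :
    ¬ IsUnit (mapDomainRingHom R ι (toLaurent q)) := by
  classical
  refine not_isUnit_of_one_lt_card_support ?_
  have hsupp : (mapDomainRingHom R ι (toLaurent q)).coeff.support =
      (toLaurent q).coeff.support.image ι :=
    Finsupp.mapDomain_support_of_injective hι _
  rw [hsupp, Finset.card_image_of_injective _ hι, support_coeff_toLaurent, Finset.card_map]
  exact Finset.one_lt_card.2 ⟨0, mem_support_iff.2 h0, q.natDegree,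
    natDegree_mem_support_of_nonzero (fun h => h0 (by simp [h])), hq.ne⟩

theorem mapDomainRingHom_zmultiplesHom_nsmul_toLaurent {R Γ : Type*} [CommSemiring R]
    [AddCommGroup Γ] (h : Γ) (n : ℕ) (q : R[X]) :
    mapDomainRingHom R (zmultiplesHom Γ (n • h)) (toLaurent q) =
      mapDomainRingHom R (zmultiplesHom Γ h) (toLaurent (expand R n q)) := by
  have key : (mapDomainRingHom R (zmultiplesHom Γ (n • h))).comp toLaurent =
      ((mapDomainRingHom R (zmultiplesHom Γ h)).comp toLaurent).comp (expand R n).toRingHom := by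
    refine Polynomial.ringHom_ext (fun a => ?_) ?_
    · simp only [RingHom.comp_apply, AlgHom.toRingHom_eq_coe, RingHom.coe_coe, expand_C,
        toLaurent_C, ← single_eq_C, mapDomainRingHom_apply, mapDomain_single, map_zero]
    · simp only [RingHom.comp_apply, AlgHom.toRingHom_eq_coe, RingHom.coe_coe, expand_X,
        toLaurent_X_pow, toLaurent_X, T, mapDomainRingHom_apply, mapDomain_single,
        zmultiplesHom_apply, natCast_zsmul, one_zsmul]
  exact RingHom.congr_fun key q

end AddMonoidAlgebra

theorem LaurentPolynomial.exists_eq_T_mul_toLaurent {R : Type*} [CommRing R] {f : R[T;T⁻¹]}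
    (hf : f ≠ 0) : ∃ (n : ℤ) (q : R[X]), q.coeff 0 ≠ 0 ∧ f = T n * toLaurent q := by
  obtain ⟨m, f', hf'⟩ := exists_T_pow f
  have hf'0 : f' ≠ 0 := by
    rintro rfl
    exact hf ((isUnit_T _).mul_left_eq_zero.1 (by rw [← hf', map_zero]))
  obtain ⟨q, hq, hdvd⟩ := f'.exists_eq_pow_rootMultiplicity_mul_and_not_dvd hf'0 0
  generalize f'.rootMultiplicity 0 = k at hq
  rw [map_zero, sub_zero] at hq hdvd
  refine ⟨k - m, q, fun h => hdvd (X_dvd_iff.2 h), ?_⟩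
  calc f = toLaurent f' * T (-m) := by rw [hf', mul_T_assoc, add_neg_cancel, T_zero, mul_one]
    _ = T (k - m) * toLaurent q := by
      rw [hq, map_mul, toLaurent_X_pow, sub_eq_add_neg, T_add]
      ring

theorem Rat.mem_zmultiples_inv_of_den_dvd {q : ℚ} {N : ℕ} (hN : N ≠ 0) (h : q.den ∣ N) :
    q ∈ AddSubgroup.zmultiples (N⁻¹ : ℚ) := by
  obtain ⟨k, rfl⟩ := h
  refine AddSubgroup.mem_zmultiples_iff.2 ⟨q.num * k, ?_⟩
  have hk : (k : ℚ) ≠ 0 := by exact_mod_cast right_ne_zero_of_mul hN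
  rw [zsmul_eq_mul, ← div_eq_mul_inv]
  push_cast
  rw [mul_div_mul_right _ _ hk, Rat.num_div_den]

theorem AddSubgroup.exists_finset_subset_zmultiples_of_rat (G : AddSubgroup ℚ) (S : Finset G) :
    ∃ g : G, (S : Set G) ⊆ AddSubgroup.zmultiples g := by
  set N := ∏ s ∈ S, (s : ℚ).den
  have hN : N ≠ 0 := Finset.prod_ne_zero_iff.2 fun s _ => (s : ℚ).den_nz
  -- `G ∩ ℤ N⁻¹` contains `S` and is cyclic as a subgroup of a cyclic group
  obtain ⟨n, hn⟩ := (AddSubgroup.le_zmultiples_iff _ (G ⊓ zmultiples (N⁻¹ : ℚ))).1 inf_le_right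
  have hgen : n • (N⁻¹ : ℚ) ∈ G ⊓ zmultiples (N⁻¹ : ℚ) := hn ▸ mem_zmultiples _
  refine ⟨⟨_, hgen.1⟩, fun s hs => ?_⟩
  have hs' : (s : ℚ) ∈ G ⊓ zmultiples (N⁻¹ : ℚ) :=
    ⟨s.2, Rat.mem_zmultiples_inv_of_den_dvd hN (Finset.dvd_prod_of_mem _ hs)⟩
  rw [hn] at hs'
  obtain ⟨k, hk⟩ := mem_zmultiples_iff.1 hs'
  exact mem_zmultiples_iff.2 ⟨k, Subtype.ext (by simpa using hk)⟩

theorem Polynomial.exists_isCoprime_mul_eq_of_isRoot {K : Type*} [Field K] {Q : K[X]} (hQ : Q ≠ 0)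
    {r s : K} (hr : Q.IsRoot r) (hs : Q.IsRoot s) (hrs : r ≠ s) :
    ∃ c d : K[X], IsCoprime c d ∧ Q = c * d ∧ 0 < c.natDegree ∧ 0 < d.natDegree := by
  obtain ⟨d, hQd, hdvd⟩ := Q.exists_eq_pow_rootMultiplicity_mul_and_not_dvd hQ r
  have hd0 : d ≠ 0 := right_ne_zero_of_mul (hQd ▸ hQ)
  have hds : d.IsRoot s := by
    rw [hQd, IsRoot, eval_mul, eval_pow, eval_sub, eval_X, eval_C] at hs
    exact (mul_eq_zero.1 hs).resolve_left (pow_ne_zero _ (sub_ne_zero.2 hrs.symm))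
  refine ⟨_, d, ((irreducible_X_sub_C r).coprime_pow_of_not_dvd _ hdvd).symm, hQd, ?_,
    natDegree_pos_iff_degree_pos.2 (degree_pos_of_root hd0 hds)⟩
  rw [natDegree_pow, natDegree_X_sub_C, mul_one]
  exact (rootMultiplicity_pos hQ).2 hr

theorem Polynomial.exists_ne_isRoot_expand {K : Type*} [Field K] [IsAlgClosed K] {p : ℕ}
    (hp : 1 < p) (hpK : (p : K) ≠ 0) {q : K[X]} (h0 : q.coeff 0 ≠ 0) (hq : 0 < q.natDegree) :
    ∃ r s : K, r ≠ s ∧ (expand K p q).IsRoot r ∧ (expand K p q).IsRoot s := by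
  obtain ⟨z, hz⟩ := IsAlgClosed.exists_root q (natDegree_pos_iff_degree_pos.1 hq).ne'
  have hz0 : z ≠ 0 := by
    rintro rfl
    exact h0 (by rwa [coeff_zero_eq_eval_zero])
  obtain ⟨r, rfl⟩ := IsAlgClosed.exists_pow_nat_eq z (zero_lt_one.trans hp)
  have hr0 : r ≠ 0 := fun hr => hz0 (by rw [hr, zero_pow (by omega)])
  have : NeZero (p : K) := ⟨hpK⟩
  obtain ⟨ζ, hζ⟩ := HasEnoughRootsOfUnity.exists_primitiveRoot K p
  refine ⟨r, ζ * r, fun h => hζ.ne_one hp ((mul_left_eq_self₀.1 h.symm).resolve_right hr0), ?_, ?_⟩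
  · rwa [IsRoot, expand_eval]
  · rwa [IsRoot, expand_eval, mul_pow, hζ.pow_eq_one, one_mul]

theorem AddSubgroup.exists_eq_mul_mapDomainRingHom_toLaurent_expand_of_rat {K : Type*} [Field K]
    {G : AddSubgroup ℚ} {p : ℕ} (hdiv : ∀ g : G, ∃ h : G, g = p • h) {b : AddMonoidAlgebra K G}
    (hb0 : b ≠ 0) (hbu : ¬ IsUnit b) :
    ∃ (h : G) (u : AddMonoidAlgebra K G) (q : K[X]), h ≠ 0 ∧ IsUnit u ∧ q.coeff 0 ≠ 0 ∧
      0 < q.natDegree ∧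
        b = u * mapDomainRingHom K (zmultiplesHom G h) (toLaurent (expand K p q)) := by
  obtain ⟨g, hg⟩ := G.exists_finset_subset_zmultiples_of_rat b.coeff.support
  obtain ⟨h, rfl⟩ := hdiv g
  have hh : h ≠ 0 := by
    rintro rfl
    obtain ⟨k, hk⟩ := Finsupp.support_subset_singleton'.1 fun s hs => by simpa using hg hs
    obtain rfl : b = single 0 k := AddMonoidAlgebra.ext hk
    exact hbu (isUnit_single 0 (Ne.isUnit fun hk0 => hb0 (by rw [hk0, single_zero])))
  obtain ⟨F, rfl⟩ := mem_range_mapDomainRingHom_of_support_subset (zmultiplesHom G (p • h))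
    fun s hs => AddSubgroup.mem_zmultiples_iff.1 (hg hs)
  obtain ⟨n, q, hq0, rfl⟩ := exists_eq_T_mul_toLaurent (f := F) fun hF => hb0 (by rw [hF, map_zero])
  have hq : 0 < q.natDegree := by
    refine Nat.pos_of_ne_zero fun hq => hbu ?_
    rw [eq_C_of_natDegree_eq_zero hq]
    exact ((isUnit_T n).mul ((isUnit_C.2 hq0.isUnit).map toLaurent)).map _
  refine ⟨h, mapDomainRingHom K (zmultiplesHom G (p • h)) (T n), q, hh, (isUnit_T n).map _, hq0,
    hq, ?_⟩
  rw [map_mul, mapDomainRingHom_zmultiplesHom_nsmul_toLaurent]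

theorem stmt14 {K : Type*} [Field K] [IsAlgClosed K]
    (G : AddSubgroup ℚ) (p : ℕ) (hp : p.Prime)
    -- `p` is different from the characteristic of `K`:
    (hpK : (p : K) ≠ 0)
    -- `Γ` is `p`-divisible:
    (hdiv : ∀ g : G, ∃ h : G, g = p • h) :
    ∀ b : AddMonoidAlgebra K G, b ≠ 0 → ¬ IsUnit b →
      ∃ c d : AddMonoidAlgebra K G, ¬ IsUnit c ∧ ¬ IsUnit d ∧
        Ideal.span {c, d} = ⊤ ∧ b = c * d := by
  intro b hb0 hbu
  obtain ⟨h, u, q, hh, hu, hq0, hq, rfl⟩ :=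
    G.exists_eq_mul_mapDomainRingHom_toLaurent_expand_of_rat hdiv hb0 hbu
  obtain ⟨r, s, hrs, hr, hs⟩ := exists_ne_isRoot_expand hp.one_lt hpK hq0 hq
  obtain ⟨c, d, hcd, hQ, hc, hd⟩ := exists_isCoprime_mul_eq_of_isRoot
    ((expand_ne_zero hp.pos).2 fun hq' => hq0 (by rw [hq', Polynomial.coeff_zero])) hr hs hrs
  have hcd0 : c.coeff 0 * d.coeff 0 ≠ 0 := by
    rwa [← mul_coeff_zero, ← hQ, coeff_expand hp.pos, if_pos (dvd_zero p), Nat.zero_div]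
  have hι : Function.Injective (zmultiplesHom G h) := smul_left_injective ℤ hh
  set φ := (mapDomainRingHom K (zmultiplesHom G h)).comp toLaurent
  refine ⟨φ c, φ d * u, not_isUnit_mapDomainRingHom_toLaurent hι (left_ne_zero_of_mul hcd0) hc,
    fun hdu => not_isUnit_mapDomainRingHom_toLaurent hι (right_ne_zero_of_mul hcd0) hd
      (isUnit_of_mul_isUnit_left hdu),
    (Ideal.eq_top_iff_one _).2 (Ideal.mem_span_pair.2 ((isCoprime_mul_unit_right_right hu _ _).2
      (hcd.map φ))), ?_⟩
  rw [hQ]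
  simp only [φ, RingHom.comp_apply, map_mul]
  ring
end

section
/- Let R be an integral domain and X a finitely generated torsion-free R-module. If the minimal number of generators of X equals the rank of X (the dimension of Q ⊗_R X over the fraction field Q), then X is a free R-module. -/
/-! A generating set `s` of `M` with `#s = n` maps onto a spanning set of `Q ⊗[R] M`, a `Q`-space of
dimension `n`, so its image is a `Q`-basis. Linear independence over `Q` descends to `R` (clear
denominators), and then to `s` itself, so `s` is an `R`-basis of `M`. -/

open Module Submodule
open scoped nonZeroDivisors

theorem LinearIndependent.of_span_eq_top_of_card_eq_finrank_of_isLocalizedModule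
    {R K M N : Type*} [CommRing R] [Field K] [Algebra R K] [IsFractionRing R K]
    [AddCommGroup M] [Module R M] [AddCommGroup N] [Module R N] [Module K N]
    [IsScalarTower R K N] (f : M →ₗ[R] N) [IsLocalizedModule R⁰ f]
    {ι : Type*} [Fintype ι] {v : ι → M} (hv : span R (Set.range v) = ⊤)
    (hcard : Fintype.card ι = finrank K N) : LinearIndependent R v := by
  have hspanK : span K (Set.range (f ∘ v)) = ⊤ := by
    rw [Set.range_comp, span_eq_top_of_isLocalizedModule K R⁰ f hv]
  have hliK : LinearIndependent K (f ∘ v) :=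
    linearIndependent_of_top_le_span_of_card_eq_finrank hspanK.ge hcard
  exact ((LinearIndependent.iff_fractionRing R K).mpr hliK).of_comp

theorem stmt17_general {R : Type*} [CommRing R] [IsDomain R]
    (M : Type*) [AddCommGroup M] [Module R M]
    (n : ℕ)
    -- `n` is the minimal number of generators of `M`:
    (hgen : ∃ s : Finset M, s.card = n ∧ Submodule.span R (s : Set M) = ⊤)
    -- `n` equals the rank of `M`, i.e. `dim_Q (Q ⊗[R] M)`:
    (hrank : Module.finrank (FractionRing R) (TensorProduct R (FractionRing R) M) = n) :
    Module.Free R M := by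
  obtain ⟨s, hcard, hspan⟩ := hgen
  have hv : span R (Set.range ((↑) : s → M)) = ⊤ := by simpa using hspan
  have hli : LinearIndependent R ((↑) : s → M) :=
    .of_span_eq_top_of_card_eq_finrank_of_isLocalizedModule
      (TensorProduct.mk R (FractionRing R) M 1) hv (by simpa [hcard] using hrank.symm)
  exact .of_basis (Basis.mk hli hv.ge)

theorem stmt17 {R : Type*} [CommRing R] [IsDomain R]
    (M : Type*) [AddCommGroup M] [Module R M] [Module.Finite R M]
    -- `M` is torsion-free:
    [NoZeroSMulDivisors R M]
    (n : ℕ)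
    -- `n` is the minimal number of generators of `M`:
    (hgen : ∃ s : Finset M, s.card = n ∧ Submodule.span R (s : Set M) = ⊤)
    (hmin : ∀ s : Finset M, Submodule.span R (s : Set M) = ⊤ → n ≤ s.card)
    -- `n` equals the rank of `M`, i.e. `dim_Q (Q ⊗[R] M)`:
    (hrank : Module.finrank (FractionRing R) (TensorProduct R (FractionRing R) M) = n) :
    Module.Free R M :=
  stmt17_general M n hgen hrank
end

section
/- If an integral domain D is the union of a join-semilattice (directed family) of seminormal subdomains, then D is seminormal. -/
/-- A seminormal domain: if `α` lies in the fraction field and `α², α³ ∈ R`, then `α ∈ R`. -/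
def Seminormal (R : Type*) [CommRing R] : Prop :=
  ∀ α : FractionRing R, α ^ 2 ∈ (algebraMap R (FractionRing R)).range →
    α ^ 3 ∈ (algebraMap R (FractionRing R)).range →
    α ∈ (algebraMap R (FractionRing R)).range

/-! Seminormality is a property of the ring alone: a domain is seminormal iff every solution of
`b² = a³` in it is of the form `(c², c³)`. Such solutions live in any subring containing `a` and
`b`, so the property passes to directed unions. -/

theorem eq_of_sq_eq_sq_of_pow_three_eq_pow_three {M : Type*} [CommMonoidWithZero M]
    [IsCancelMulZero M] {x y : M} (h2 : x ^ 2 = y ^ 2) (h3 : x ^ 3 = y ^ 3) : x = y := by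
  by_cases hx : x = 0
  · subst hx
    exact (pow_eq_zero_iff two_ne_zero).mp (h2.symm.trans (zero_pow two_ne_zero)) |>.symm
  · have hx2 : x ^ 2 ≠ 0 := pow_ne_zero 2 hx
    refine mul_right_cancel₀ hx2 ?_
    rw [← pow_succ', h3, pow_succ', h2]

theorem seminormal_iff {R : Type*} [CommRing R] [IsDomain R] :
    Seminormal R ↔ ∀ a b : R, b ^ 2 = a ^ 3 → ∃ c : R, c ^ 2 = a ∧ c ^ 3 = b := by
  have hinj : Function.Injective (algebraMap R (FractionRing R)) :=
    IsFractionRing.injective R (FractionRing R)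
  constructor
  · intro hR a b hab
    obtain ⟨γ, hγb, hγa⟩ := (pow_eq_pow_iff_of_coprime (by norm_num : Nat.Coprime 2 3)).mp
      (by rw [← map_pow, ← map_pow, hab] :
        (algebraMap R (FractionRing R) b) ^ 2 = (algebraMap R (FractionRing R) a) ^ 3)
    obtain ⟨c, rfl⟩ := hR γ ⟨a, hγa⟩ ⟨b, hγb⟩
    exact ⟨c, hinj (by rw [map_pow, hγa]), hinj (by rw [map_pow, hγb])⟩
  · rintro hR α ⟨a, ha⟩ ⟨b, hb⟩
    obtain ⟨c, hca, hcb⟩ := hR a b <| hinj <| by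
      rw [map_pow, map_pow, ha, hb, ← pow_mul, ← pow_mul]
    refine ⟨c, eq_of_sq_eq_sq_of_pow_three_eq_pow_three ?_ ?_⟩
    · rw [← map_pow, hca, ha]
    · rw [← map_pow, hcb, hb]

theorem stmt19 {D : Type*} [CommRing D] [IsDomain D] {ι : Type*}
    (S : ι → Subring D)
    (hdir : ∀ i j : ι, ∃ k : ι, S i ≤ S k ∧ S j ≤ S k)
    (hsn : ∀ i : ι, Seminormal (S i))
    (hcov : ∀ x : D, ∃ i : ι, x ∈ S i) :
    Seminormal D := by
  rw [seminormal_iff]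
  intro a b hab
  obtain ⟨i, ha⟩ := hcov a
  obtain ⟨j, hb⟩ := hcov b
  obtain ⟨k, hik, hjk⟩ := hdir i j
  obtain ⟨c, hca, hcb⟩ :=
    seminormal_iff.mp (hsn k) ⟨a, hik ha⟩ ⟨b, hjk hb⟩ (Subtype.ext hab)
  exact ⟨c, congrArg Subtype.val hca, congrArg Subtype.val hcb⟩
end
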